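/- Let a : ℝ^d × ℝ^d → ℂ be measurable with ∂_ξ^β a ∈ L¹_loc locally integrable for |β| ≤ d+1 and suppose M := max_{|β|≤d+1} ess sup_{(x,ξ)} |∂_ξ^β a(x,ξ)| ⟨ξ⟩^{d+1} < ∞. Set k_a(x,v) = (2π)^{-d} ∫ e^{i v·ξ} a(x,ξ) dξ. Then |k_a(x,v)| ≤ C M ⟨v⟩^{-(d+1)} for almost every x and all v ∈ ℝ^d, with C depending only on d. -/

import Mathlib

open MeasureTheory Complex Real FourierTransform

set_option synthInstance.maxHeartbeats 1000000
set_option maxHeartbeats 1000000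

noncomputable section

lemma symb_bound (d : ℕ) :
    ∃ C > 0, ∀ (M : ℝ) (f : EuclideanSpace ℝ (Fin d) → ℂ),
      ContDiff ℝ (d + 1) f →
      (∀ (n : ℕ) (ξ : EuclideanSpace ℝ (Fin d)), n ≤ d + 1 →
        ‖iteratedFDeriv ℝ n f ξ‖ * Real.sqrt (1 + ‖ξ‖ ^ 2) ^ (d + 1) ≤ M) →
      ∀ v : EuclideanSpace ℝ (Fin d),
        ‖((((2 * Real.pi) ^ d)⁻¹ : ℝ) : ℂ) *
            ∫ ξ, Complex.exp (Complex.I * ((inner ℝ v ξ : ℝ) : ℂ)) * f ξ‖ *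
          Real.sqrt (1 + ‖v‖ ^ 2) ^ (d + 1) ≤ C * M := by
  set Id : ℝ := ∫ x : EuclideanSpace ℝ (Fin d), ((1:ℝ) + ‖x‖ ^ 2) ^ (-((d:ℝ)+1) / 2) with hIdd
  have hIdInt : Integrable
      (fun x : EuclideanSpace ℝ (Fin d) ↦ ((1:ℝ) + ‖x‖ ^ 2) ^ (-((d:ℝ)+1) / 2)) := by
    have h1 : ((Module.finrank ℝ (EuclideanSpace ℝ (Fin d)) : ℝ)) < (d:ℝ)+1 := by
      rw [finrank_euclideanSpace_fin]; linarith
    exact integrable_rpow_neg_one_add_norm_sq (μ := volume) h1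
  have hId0 : 0 ≤ Id := integral_nonneg fun x => Real.rpow_nonneg (by positivity) _
  have pi_pos := Real.pi_pos
  refine ⟨2*π*4^(d+1)*((d:ℝ)+2)*Id + 2^(d+1)*Id + 1,
    by nlinarith [mul_nonneg (show (0:ℝ) ≤ 2*π*4^(d+1)*((d:ℝ)+2) by positivity) hId0,
      mul_nonneg (show (0:ℝ) ≤ (2:ℝ)^(d+1) by positivity) hId0], ?_⟩
  intro M f hf hbound v
  have hM0 : 0 ≤ M := le_trans (by positivity) (hbound 0 0 (by omega))
  have hS : ∀ ξ : EuclideanSpace ℝ (Fin d),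
      Real.sqrt (1 + ‖ξ‖ ^ 2) ^ (d + 1) = ((1:ℝ) + ‖ξ‖ ^ 2) ^ (((d:ℝ)+1) / 2) := by
    intro ξ
    rw [← Real.rpow_natCast (Real.sqrt (1 + ‖ξ‖ ^ 2)) (d+1), Real.sqrt_eq_rpow,
      ← Real.rpow_mul (by positivity)]
    push_cast
    ring_nf
  have hfd : ∀ n : ℕ, n ≤ d + 1 → ∀ ξ : EuclideanSpace ℝ (Fin d),
      ‖iteratedFDeriv ℝ n f ξ‖ ≤ M * ((1:ℝ) + ‖ξ‖ ^ 2) ^ (-((d:ℝ)+1) / 2) := by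
    intro n hn ξ
    have h := hbound n ξ hn
    rw [hS ξ] at h
    have hp : (0:ℝ) < ((1:ℝ) + ‖ξ‖ ^ 2) ^ (((d:ℝ)+1) / 2) := Real.rpow_pos_of_pos (by positivity) _
    have hinv : ((1:ℝ)+‖ξ‖^2) ^ (-((d:ℝ)+1)/2) = (((1:ℝ)+‖ξ‖^2) ^ (((d:ℝ)+1)/2))⁻¹ := by
      rw [neg_div, Real.rpow_neg (by positivity)]
    rw [hinv, ← div_eq_mul_inv, le_div_iff₀ hp]
    exact h
  have hInt : ∀ n : ℕ, n ≤ d + 1 → Integrable (iteratedFDeriv ℝ n f) := by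
    intro n hn
    refine (hIdInt.const_mul M).mono' ?_ (Filter.Eventually.of_forall fun ξ => hfd n hn ξ)
    exact (hf.continuous_iteratedFDeriv (by exact_mod_cast Nat.cast_le.mpr hn)).aestronglyMeasurable
  have hIntNorm : ∀ n : ℕ, n ≤ d + 1 → ∫ ξ, ‖iteratedFDeriv ℝ n f ξ‖ ≤ M * Id := by
    intro n hn
    rw [hIdd, ← integral_const_mul]
    exact integral_mono (hInt n hn).norm (hIdInt.const_mul M) (fun ξ => hfd n hn ξ)
  set w : EuclideanSpace ℝ (Fin d) := -((2*π)⁻¹ • v) with hwdef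
  have hA : (∫ ξ, Complex.exp (Complex.I * ((inner ℝ v ξ : ℝ) : ℂ)) * f ξ) = 𝓕 f w := by
    rw [Real.fourier_eq']
    congr 1
    funext ξ
    rw [smul_eq_mul]
    congr 1
    have hinner : (inner ℝ ξ w : ℝ) = -((2*π)⁻¹ * (inner ℝ v ξ : ℝ)) := by
      rw [hwdef, inner_neg_right, real_inner_smul_right, real_inner_comm]
    rw [hinner]
    have h2π : (2*π) ≠ 0 := by positivity
    have he : (-2) * π * -((2*π)⁻¹ * (inner ℝ v ξ : ℝ)) = (inner ℝ v ξ : ℝ) := by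
      field_simp
    rw [he, mul_comm]
  have h'f : ∀ (k n : ℕ), (k:ℕ∞) ≤ (0:ℕ∞) → (n:ℕ∞) ≤ ((d+1:ℕ):ℕ∞) →
      Integrable (fun ξ : EuclideanSpace ℝ (Fin d) ↦ ‖ξ‖ ^ k * ‖iteratedFDeriv ℝ n f ξ‖) := by
    intro k n hk hn
    have hk0 : k = 0 := by exact_mod_cast Nat.le_zero.mp (by exact_mod_cast hk)
    subst hk0
    simp only [pow_zero, one_mul]
    exact (hInt n (by exact_mod_cast hn)).norm
  have hfN : ContDiff ℝ ((d+1:ℕ):ℕ∞) f := by exact_mod_cast hf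
  have hkey := Real.pow_mul_norm_iteratedFDeriv_fourier_le (K := 0) (N := ((d+1:ℕ):ℕ∞))
    hfN h'f (k := 0) (n := d+1) le_rfl le_rfl w
  simp only [pow_zero, one_mul, norm_iteratedFDeriv_zero, Finset.range_one,
    Finset.singleton_product, Finset.sum_map, Function.Embedding.coeFn_mk,
    Nat.cast_zero, mul_zero, zero_add] at hkey
  have hsum : ∑ m ∈ Finset.range (d+1+1), ∫ ξ, ‖iteratedFDeriv ℝ m f ξ‖ ≤ ((d:ℝ)+2) * (M * Id) := by
    calc ∑ m ∈ Finset.range (d+1+1), ∫ ξ, ‖iteratedFDeriv ℝ m f ξ‖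
        ≤ ∑ _m ∈ Finset.range (d+1+1), M * Id :=
          Finset.sum_le_sum fun m hm => hIntNorm m (Nat.lt_succ_iff.mp (Finset.mem_range.mp hm))
      _ = ((d:ℝ)+2) * (M * Id) := by
          rw [Finset.sum_const, Finset.card_range, nsmul_eq_mul]; push_cast; ring
  have hw1 : ‖w‖^(d+1) * ‖𝓕 f w‖ ≤ 2^(d+1) * (((d:ℝ)+2) * (M * Id)) :=
    hkey.trans (mul_le_mul_of_nonneg_left hsum (by positivity))
  have hw0 : ‖𝓕 f w‖ ≤ M * Id := by
    calc ‖𝓕 f w‖ ≤ ∫ ξ, ‖f ξ‖ :=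
          VectorFourier.norm_fourierIntegral_le_integral_norm _ _ _ f w
      _ = ∫ ξ, ‖iteratedFDeriv ℝ 0 f ξ‖ := by simp [norm_iteratedFDeriv_zero]
      _ ≤ M * Id := hIntNorm 0 (by omega)
  rw [hA, norm_mul, Complex.norm_real]
  rw [show ‖(((2*π)^d)⁻¹ : ℝ)‖ = ((2*π)^d)⁻¹ from abs_of_nonneg (by positivity)]
  have hinvle : ((2*π)^d)⁻¹ ≤ 1 := by
    apply inv_le_one_of_one_le₀
    apply one_le_pow₀
    nlinarith [Real.pi_gt_three]
  have hAId : (0:ℝ) ≤ 2*π*4^(d+1)*((d:ℝ)+2)*Id := mul_nonneg (by positivity) hId0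
  have hBId : (0:ℝ) ≤ (2:ℝ)^(d+1)*Id := mul_nonneg (by positivity) hId0
  rcases le_total ‖v‖ 1 with hv | hv
  · have hs2 : Real.sqrt (1+‖v‖^2) ≤ 2 := by
      nlinarith [Real.sq_sqrt (show (0:ℝ) ≤ 1+‖v‖^2 by positivity),
        Real.sqrt_nonneg (1+‖v‖^2), norm_nonneg v]
    have hsp : Real.sqrt (1+‖v‖^2)^(d+1) ≤ 2^(d+1) :=
      pow_le_pow_left₀ (Real.sqrt_nonneg _) hs2 _
    calc ((2*π)^d)⁻¹ * ‖𝓕 f w‖ * Real.sqrt (1+‖v‖^2)^(d+1)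
        ≤ 1 * (M*Id) * 2^(d+1) := by
          apply mul_le_mul (mul_le_mul hinvle hw0 (norm_nonneg _) zero_le_one) hsp
            (by positivity) (by nlinarith [mul_nonneg hM0 hId0])
      _ = (2^(d+1)*Id) * M := by ring
      _ ≤ (2*π*4^(d+1)*((d:ℝ)+2)*Id + 2^(d+1)*Id + 1) * M := by
          apply mul_le_mul_of_nonneg_right ?_ hM0
          linarith
  · have hnvw : ‖w‖ = (2*π)⁻¹ * ‖v‖ := by
      rw [hwdef, norm_neg, norm_smul, show ‖((2*π)⁻¹ : ℝ)‖ = ((2*π)⁻¹ : ℝ) from abs_of_nonneg (by positivity)]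
    have hnv : ‖v‖ = 2*π*‖w‖ := by rw [hnvw]; field_simp
    have hs2 : Real.sqrt (1+‖v‖^2) ≤ 2*‖v‖ := by
      rw [show 2*‖v‖ = Real.sqrt ((2*‖v‖)^2) from (Real.sqrt_sq (by positivity)).symm]
      apply Real.sqrt_le_sqrt
      nlinarith
    have hsp : Real.sqrt (1+‖v‖^2)^(d+1) ≤ 2^(d+1) * ((2*π)^(d+1) * ‖w‖^(d+1)) := by
      calc Real.sqrt (1+‖v‖^2)^(d+1) ≤ (2*‖v‖)^(d+1) :=
            pow_le_pow_left₀ (Real.sqrt_nonneg _) hs2 _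
        _ = 2^(d+1) * ((2*π)^(d+1) * ‖w‖^(d+1)) := by rw [hnv]; simp only [mul_pow]
    have hne : ((2*π):ℝ)^d ≠ 0 := by positivity
    calc ((2*π)^d)⁻¹ * ‖𝓕 f w‖ * Real.sqrt (1+‖v‖^2)^(d+1)
        ≤ ((2*π)^d)⁻¹ * ‖𝓕 f w‖ * (2^(d+1) * ((2*π)^(d+1) * ‖w‖^(d+1))) :=
          mul_le_mul_of_nonneg_left hsp (by positivity)
      _ = (2*π) * 2^(d+1) * (‖w‖^(d+1) * ‖𝓕 f w‖) := by
          rw [pow_succ (2*π) d]; field_simp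
      _ ≤ (2*π) * 2^(d+1) * (2^(d+1) * (((d:ℝ)+2) * (M*Id))) :=
          mul_le_mul_of_nonneg_left hw1 (by positivity)
      _ = (2*π*4^(d+1)*((d:ℝ)+2)*Id) * M := by
          rw [show ((4:ℝ))^(d+1) = 2^(d+1) * 2^(d+1) by rw [← mul_pow]; norm_num]
          ring
      _ ≤ (2*π*4^(d+1)*((d:ℝ)+2)*Id + 2^(d+1)*Id + 1) * M := by
          apply mul_le_mul_of_nonneg_right ?_ hM0
          linarith


/-- The partial inverse Fourier transform in `ξ` of a symbol:
`k_a(x,v) = (2π)^{-d} ∫ e^{i v·ξ} a(x,ξ) dξ`. -/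
def symbKernel (d : ℕ) (a : EuclideanSpace ℝ (Fin d) → EuclideanSpace ℝ (Fin d) → ℂ)
    (x v : EuclideanSpace ℝ (Fin d)) : ℂ :=
  (((2 * Real.pi) ^ d)⁻¹ : ℝ) *
    ∫ ξ, Complex.exp (Complex.I * ((inner ℝ v ξ : ℝ) : ℂ)) * a x ξ

/-- If, for a.e. `x`, `a(x,·)` is `C^{d+1}` in `ξ` with
`‖∂_ξ^β a(x,ξ)‖ ⟨ξ⟩^{d+1} ≤ M` for all `|β| ≤ d+1`, then
`|k_a(x,v)| ≤ C M ⟨v⟩^{-(d+1)}` for a.e. `x` and all `v`, with `C = C(d)`. -/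
theorem symbKernel_decay (d : ℕ) :
    ∃ C > 0, ∀ (M : ℝ) (a : EuclideanSpace ℝ (Fin d) → EuclideanSpace ℝ (Fin d) → ℂ),
      (∀ᵐ x ∂(volume : Measure (EuclideanSpace ℝ (Fin d))),
        ContDiff ℝ (d + 1) (a x) ∧
        ∀ (n : ℕ) (ξ : EuclideanSpace ℝ (Fin d)), n ≤ d + 1 →
          ‖iteratedFDeriv ℝ n (a x) ξ‖ * Real.sqrt (1 + ‖ξ‖ ^ 2) ^ (d + 1) ≤ M) →
      ∀ᵐ x ∂(volume : Measure (EuclideanSpace ℝ (Fin d))),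
        ∀ v, ‖symbKernel d a x v‖ ≤ C * M * Real.sqrt (1 + ‖v‖ ^ 2) ^ (-(d : ℝ) - 1) := by
  obtain ⟨C, hC, hkey⟩ := symb_bound d
  refine ⟨C, hC, ?_⟩
  intro M a h
  filter_upwards [h] with x hx v
  obtain ⟨h1, h2⟩ := hx
  have hb := hkey M (a x) h1 h2 v
  have hSpos : 0 < Real.sqrt (1 + ‖v‖ ^ 2) := Real.sqrt_pos.mpr (by positivity)
  have hrpow : Real.sqrt (1 + ‖v‖ ^ 2) ^ (-(d:ℝ) - 1)
      = (Real.sqrt (1 + ‖v‖ ^ 2) ^ (d + 1))⁻¹ := by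
    rw [show (-(d:ℝ) - 1) = -((d+1:ℕ):ℝ) by push_cast; ring, Real.rpow_neg hSpos.le,
      Real.rpow_natCast]
  rw [hrpow, ← div_eq_mul_inv, le_div_iff₀ (by positivity)]
  exact hb
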